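/- arXiv:1006.3891 — 2 statements merged into one kernel-verified Lean document; each statement's English description precedes it below -/
import Mathlib

section
/- Let u : ℝ × ℝ³ → ℝ³ be continuously differentiable with div u = 0, let θ, q : ℝ × ℝ³ → ℝ be twice continuously differentiable with Dθ/Dt = 0 and Dq/Dt = 0 everywhere, and let Q : ℝ → ℝ be twice continuously differentiable. Then B := ∇Q(q) × ∇θ satisfies DB/Dt = (B·∇)u and div B = 0 everywhere; i.e. B obeys the same stretching equation as the vorticity in the incompressible Euler equations. -/
open scoped BigOperators

noncomputable section

/-- Points of space-time: `(t, x)` with `x : Fin 3 → ℝ`. -/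
abbrev Pt := ℝ × (Fin 3 → ℝ)

/-- Spatial partial derivative in the `j`-th coordinate direction. -/
noncomputable def pd {E : Type*} [NormedAddCommGroup E] [NormedSpace ℝ E]
    (F : Pt → E) (j : Fin 3) (p : Pt) : E :=
  fderiv ℝ F p (0, Pi.single j 1)

/-- Partial time derivative. -/
noncomputable def pt {E : Type*} [NormedAddCommGroup E] [NormedSpace ℝ E]
    (F : Pt → E) (p : Pt) : E :=
  fderiv ℝ F p (1, 0)

/-- Material derivative `DF/Dt = ∂F/∂t + (u·∇)F`. -/
noncomputable def matD {E : Type*} [NormedAddCommGroup E] [NormedSpace ℝ E]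
    (u : Pt → Fin 3 → ℝ) (F : Pt → E) (p : Pt) : E :=
  pt F p + ∑ j, u p j • pd F j p

/-- Spatial gradient of a scalar field. -/
noncomputable def grad (f : Pt → ℝ) (p : Pt) : Fin 3 → ℝ := fun j => pd f j p

/-- `(B·∇)u`, with `i`-th component `∑ j, B j * ∂u_i/∂x_j`. -/
noncomputable def vecAdv (B u : Pt → Fin 3 → ℝ) (p : Pt) : Fin 3 → ℝ :=
  ∑ j, B p j • pd u j p

/-- Euclidean dot product on `ℝ³`. -/
noncomputable def dot3 (a b : Fin 3 → ℝ) : ℝ := ∑ i, a i * b i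

/-- Spatial divergence `div u = ∑ j, ∂u_j/∂x_j`. -/
noncomputable def div3 (u : Pt → Fin 3 → ℝ) (p : Pt) : ℝ := ∑ j, pd u j p j

/-- Spatial curl of a vector field. -/
noncomputable def curl3 (v : Pt → Fin 3 → ℝ) (p : Pt) : Fin 3 → ℝ :=
  ![pd v 1 p 2 - pd v 2 p 1, pd v 2 p 0 - pd v 0 p 2, pd v 0 p 1 - pd v 1 p 0]

/-- Cross product on `ℝ³`. -/
noncomputable def cross3 (a b : Fin 3 → ℝ) : Fin 3 → ℝ := crossProduct a b

/-!
Gradients of materially conserved scalars are transported by the transposed velocity gradient: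
differentiating `∇f · (1, u) = 0` in space and using the symmetry of second derivatives gives
`D(∇f)/Dt = -(∇u)ᵀ ∇f`. For `B = a × b` with `a = ∇Q(q)`, `b = ∇θ` and `M = ∇u`, the product rule
and the identity `(Mᵀa) × b + a × (Mᵀb) = (tr M)(a × b) - M(a × b)` give `DB/Dt = M B` because
`tr M = div u = 0`. Finally `div (a × b) = b · curl a - a · curl b`, and gradients are curl-free.
-/

open scoped Matrix

lemma transpose_mulVec_cross_add_cross_transpose_mulVec {R : Type*} [CommRing R]
    (M : Matrix (Fin 3) (Fin 3) R) (a b : Fin 3 → R) :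
    (Mᵀ *ᵥ a) ⨯₃ b + a ⨯₃ (Mᵀ *ᵥ b) = M.trace • (a ⨯₃ b) - M *ᵥ (a ⨯₃ b) := by
  ext i
  fin_cases i <;>
    simp only [cross_apply, Matrix.mulVec, dotProduct, Matrix.transpose_apply, Matrix.trace,
      Matrix.diag_apply, Fin.sum_univ_three, Pi.add_apply, Pi.sub_apply, Matrix.smul_cons,
      smul_eq_mul, Matrix.smul_empty, Fin.isValue, Fin.zero_eta, Fin.mk_one, Fin.reduceFinMk,
      Matrix.cons_val_zero, Matrix.cons_val_one, Matrix.cons_val] <;> ring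

lemma fderiv_cross {E : Type*} [NormedAddCommGroup E] [NormedSpace ℝ E]
    {a b : E → Fin 3 → ℝ} {x : E} (ha : DifferentiableAt ℝ a x) (hb : DifferentiableAt ℝ b x)
    (v : E) :
    fderiv ℝ (fun y => a y ⨯₃ b y) x v = fderiv ℝ a x v ⨯₃ b x + a x ⨯₃ fderiv ℝ b x v := by
  have hderiv := (crossProduct (R := ℝ)).toContinuousBilinearMap.fderiv_of_bilinear ha hb
  simp only [LinearMap.toContinuousBilinearMap_apply] at hderiv
  rw [hderiv]
  simp [add_comm]

lemma ContDiffAt.differentiableAt_fderiv {E F : Type*} [NormedAddCommGroup E] [NormedSpace ℝ E]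
    [NormedAddCommGroup F] [NormedSpace ℝ F] {f : E → F} {x : E} (hf : ContDiffAt ℝ 2 f x) :
    DifferentiableAt ℝ (fderiv ℝ f) x :=
  (hf.fderiv_right (m := 1) le_rfl).differentiableAt one_ne_zero

lemma fderiv_zero_prod {E : Type*} [NormedAddCommGroup E] [NormedSpace ℝ E]
    (F : Pt → E) (p : Pt) (w : Fin 3 → ℝ) :
    fderiv ℝ F p (0, w) = ∑ j, w j • pd F j p := by
  have hw : ((0, w) : Pt) = ∑ j, w j • ((0, Pi.single j 1) : Pt) := by
    ext i <;> simp [Prod.fst_sum, Prod.snd_sum, Finset.sum_apply, Pi.single_apply]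
  simp only [hw, map_sum, map_smul, pd]

lemma matD_eq_fderiv {E : Type*} [NormedAddCommGroup E] [NormedSpace ℝ E]
    (u : Pt → Fin 3 → ℝ) (F : Pt → E) (p : Pt) :
    matD u F p = fderiv ℝ F p (1, u p) := by
  rw [matD, pt, ← fderiv_zero_prod, ← map_add, Prod.mk_add_mk, add_zero, zero_add]

lemma matD_cross (u : Pt → Fin 3 → ℝ) {a b : Pt → Fin 3 → ℝ} {p : Pt}
    (ha : DifferentiableAt ℝ a p) (hb : DifferentiableAt ℝ b p) :
    matD u (fun r => a r ⨯₃ b r) p = matD u a p ⨯₃ b p + a p ⨯₃ matD u b p := by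
  simp only [matD_eq_fderiv, fderiv_cross ha hb]

lemma matD_comp (u : Pt → Fin 3 → ℝ) {Q : ℝ → ℝ} {f : Pt → ℝ} {p : Pt}
    (hQ : DifferentiableAt ℝ Q (f p)) (hf : DifferentiableAt ℝ f p) :
    matD u (fun r => Q (f r)) p = deriv Q (f p) * matD u f p := by
  simp only [matD_eq_fderiv, fderiv_fun_comp p hQ hf, ContinuousLinearMap.comp_apply,
    fderiv_eq_smul_deriv, smul_eq_mul, mul_comm]

lemma div3_cross {a b : Pt → Fin 3 → ℝ} {p : Pt}
    (ha : DifferentiableAt ℝ a p) (hb : DifferentiableAt ℝ b p) :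
    div3 (fun r => a r ⨯₃ b r) p = dot3 (b p) (curl3 a p) - dot3 (a p) (curl3 b p) := by
  simp only [div3, pd, fderiv_cross ha hb]
  simp only [dot3, curl3, pd, cross_apply, Fin.sum_univ_three, Pi.add_apply, Fin.isValue,
    Matrix.cons_val_zero, Matrix.cons_val_one, Matrix.cons_val]
  ring

lemma hasFDerivAt_grad {f : Pt → ℝ} {p : Pt} (hf : DifferentiableAt ℝ (fderiv ℝ f) p) :
    HasFDerivAt (grad f)
      ((ContinuousLinearMap.pi fun j =>
        ContinuousLinearMap.apply ℝ ℝ ((0, Pi.single j 1) : Pt)).comp (fderiv ℝ (fderiv ℝ f) p)) p :=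
  (ContinuousLinearMap.pi fun j =>
    ContinuousLinearMap.apply ℝ ℝ ((0, Pi.single j 1) : Pt)).hasFDerivAt.comp p hf.hasFDerivAt

lemma fderiv_grad_apply {f : Pt → ℝ} {p : Pt} (hf : DifferentiableAt ℝ (fderiv ℝ f) p)
    (v : Pt) (j : Fin 3) :
    fderiv ℝ (grad f) p v j = fderiv ℝ (fderiv ℝ f) p v (0, Pi.single j 1) := by
  rw [(hasFDerivAt_grad hf).fderiv]
  rfl

lemma pd_grad_comm {f : Pt → ℝ} {p : Pt} (hf : ContDiffAt ℝ 2 f p) (i j : Fin 3) :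
    pd (grad f) j p i = pd (grad f) i p j := by
  simp only [pd, fderiv_grad_apply hf.differentiableAt_fderiv]
  exact hf.isSymmSndFDerivAt (by simp) _ _

lemma curl3_grad {f : Pt → ℝ} {p : Pt} (hf : ContDiffAt ℝ 2 f p) : curl3 (grad f) p = 0 := by
  ext i
  fin_cases i <;> simp [curl3, pd_grad_comm hf 1 2, pd_grad_comm hf 2 0, pd_grad_comm hf 0 1]

lemma differentiableAt_grad {f : Pt → ℝ} {p : Pt} (hf : ContDiffAt ℝ 2 f p) :
    DifferentiableAt ℝ (grad f) p :=
  (hasFDerivAt_grad hf.differentiableAt_fderiv).differentiableAt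

def spatialJacobian (u : Pt → Fin 3 → ℝ) (p : Pt) : Matrix (Fin 3) (Fin 3) ℝ :=
  Matrix.of fun i j => pd u j p i

lemma vecAdv_eq_mulVec (B u : Pt → Fin 3 → ℝ) (p : Pt) :
    vecAdv B u p = spatialJacobian u p *ᵥ B p := by
  ext i
  simp [vecAdv, spatialJacobian, Matrix.mulVec, dotProduct, Finset.sum_apply, mul_comm]

lemma div3_eq_trace (u : Pt → Fin 3 → ℝ) (p : Pt) : div3 u p = (spatialJacobian u p).trace := rfl

open Filter Topology in
lemma matD_grad_of_matD_eq_zero {u : Pt → Fin 3 → ℝ} {f : Pt → ℝ} {p : Pt}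
    (hu : DifferentiableAt ℝ u p) (hf : ContDiffAt ℝ 2 f p)
    (hfeq : ∀ᶠ r in 𝓝 p, matD u f r = 0) :
    matD u (grad f) p = -((spatialJacobian u p)ᵀ *ᵥ grad f p) := by
  have hf' := hf.differentiableAt_fderiv
  have hdir : HasFDerivAt (fun r => ((1 : ℝ), u r)) ((0 : Pt →L[ℝ] ℝ).prod (fderiv ℝ u p)) p :=
    (hasFDerivAt_const 1 p).prodMk hu.hasFDerivAt
  have hconst : fderiv ℝ (fun r => fderiv ℝ f r (1, u r)) p = 0 := by
    have : (fun r => fderiv ℝ f r (1, u r)) =ᶠ[𝓝 p] fun _ => 0 :=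
      hfeq.mono fun r hr => by rwa [matD_eq_fderiv] at hr
    rw [this.fderiv_eq, fderiv_const_apply]
  rw [fderiv_clm_apply hf' hdir.differentiableAt, hdir.fderiv] at hconst
  ext j
  have hj := congr($hconst ((0, Pi.single j 1) : Pt))
  simp only [add_apply, ContinuousLinearMap.comp_apply, ContinuousLinearMap.prod_apply,
    ContinuousLinearMap.flip_apply, zero_apply] at hj
  rw [fderiv_zero_prod f] at hj
  simp only [smul_eq_mul] at hj
  change ∑ k, pd u j p k * pd f k p + _ = 0 at hj
  rw [matD_eq_fderiv, fderiv_grad_apply hf', hf.isSymmSndFDerivAt (by simp)]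
  simp only [Pi.neg_apply, Matrix.mulVec, dotProduct, Matrix.transpose_apply, spatialJacobian,
    Matrix.of_apply, grad]
  change _ = -∑ k, pd u j p k * pd f k p
  linear_combination hj

/-- For incompressible flow (`div u = 0`) with `Dθ/Dt = 0` and `Dq/Dt = 0`, the vector
`B := ∇Q(q) × ∇θ` satisfies the vorticity stretching equation `DB/Dt = (B·∇)u`
together with `div B = 0` everywhere. -/
theorem B_stretching_incompressible
    (u : Pt → Fin 3 → ℝ) (θ qf : Pt → ℝ) (Q : ℝ → ℝ)
    (hu : ContDiff ℝ 1 u) (hθ : ContDiff ℝ 2 θ) (hq : ContDiff ℝ 2 qf)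
    (hQ : ContDiff ℝ 2 Q)
    (hdiv : ∀ p, div3 u p = 0)
    (hθeq : ∀ p, matD u θ p = 0)
    (hqeq : ∀ p, matD u qf p = 0)
    (B : Pt → Fin 3 → ℝ)
    (hBdef : ∀ p, B p = cross3 (grad (fun r => Q (qf r)) p) (grad θ p))
    (p : Pt) :
    matD u B p = vecAdv B u p ∧ div3 B p = 0 := by
  set g : Pt → ℝ := fun r => Q (qf r)
  have hg : ContDiff ℝ 2 g := hQ.comp hq
  have hgeq : ∀ r, matD u g r = 0 := fun r => by
    rw [matD_comp u (hQ.differentiable two_ne_zero _) (hq.differentiable two_ne_zero r), hqeq,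
      mul_zero]
  obtain rfl : B = fun r => grad g r ⨯₃ grad θ r := funext hBdef
  have hDg := matD_grad_of_matD_eq_zero (hu.differentiable one_ne_zero p) hg.contDiffAt
    (Filter.Eventually.of_forall hgeq)
  have hDθ := matD_grad_of_matD_eq_zero (hu.differentiable one_ne_zero p) hθ.contDiffAt
    (Filter.Eventually.of_forall hθeq)
  have hg' := differentiableAt_grad (hg.contDiffAt (x := p))
  have hθ' := differentiableAt_grad (hθ.contDiffAt (x := p))
  constructor
  · rw [matD_cross u hg' hθ', hDg, hDθ, map_neg, LinearMap.neg_apply, map_neg, ← neg_add,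
      transpose_mulVec_cross_add_cross_transpose_mulVec, ← div3_eq_trace, hdiv, zero_smul,
      zero_sub, neg_neg, vecAdv_eq_mulVec]
  · rw [div3_cross hg' hθ', curl3_grad hg.contDiffAt, curl3_grad hθ.contDiffAt]
    simp [dot3]
end
end

section
/- (Alignment dynamics, second frame equation.) Let B : ℝ → ℝ³ be twice differentiable with B(t) ≠ 0, set a := Ḃ, b := B̈, B̂ := B/|B|, χ_a := |B|⁻¹(B̂ × a), χ_b := |B|⁻¹(B̂ × b), and assume χ_a(t) ≠ 0 for all t. Define χ̂_a := χ_a/|χ_a|, c_b := B̂·(χ̂_a × χ_b), and the Darboux angular velocity vector D_a := χ_a + (c_b/|χ_a|) B̂. Then (d/dt) χ̂_a = D_a × χ̂_a for all t. -/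
open scoped BigOperators

noncomputable section

/-- Euclidean norm on `ℝ³`. -/
noncomputable def norm3 (a : Fin 3 → ℝ) : ℝ := Real.sqrt (∑ i, a i ^ 2)

/-- The unit vector `B̂ := B/|B|` along a curve `B : ℝ → ℝ³`. -/
noncomputable def Bhat (B : ℝ → Fin 3 → ℝ) (t : ℝ) : Fin 3 → ℝ :=
  (norm3 (B t))⁻¹ • B t

/-- The growth rate `α_a := |B|⁻¹ (B̂·Ḃ)`. -/
noncomputable def αa (B : ℝ → Fin 3 → ℝ) (t : ℝ) : ℝ :=
  (norm3 (B t))⁻¹ * dot3 (Bhat B t) (deriv B t)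

/-- The swing rate `χ_a := |B|⁻¹ (B̂ × Ḃ)`. -/
noncomputable def χa (B : ℝ → Fin 3 → ℝ) (t : ℝ) : Fin 3 → ℝ :=
  (norm3 (B t))⁻¹ • cross3 (Bhat B t) (deriv B t)

/-- `α_b := |B|⁻¹ (B̂·B̈)`. -/
noncomputable def αb (B : ℝ → Fin 3 → ℝ) (t : ℝ) : ℝ :=
  (norm3 (B t))⁻¹ * dot3 (Bhat B t) (deriv (deriv B) t)

/-- `χ_b := |B|⁻¹ (B̂ × B̈)`. -/
noncomputable def χb (B : ℝ → Fin 3 → ℝ) (t : ℝ) : Fin 3 → ℝ :=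
  (norm3 (B t))⁻¹ • cross3 (Bhat B t) (deriv (deriv B) t)

/-- The unit vector `χ̂_a := χ_a/|χ_a|`. -/
noncomputable def χahat (B : ℝ → Fin 3 → ℝ) (t : ℝ) : Fin 3 → ℝ :=
  (norm3 (χa B t))⁻¹ • χa B t

/-- `c_b := B̂·(χ̂_a × χ_b)`. -/
noncomputable def cb (B : ℝ → Fin 3 → ℝ) (t : ℝ) : ℝ :=
  dot3 (Bhat B t) (cross3 (χahat B t) (χb B t))

/-- The Darboux angular velocity vector `D_a := χ_a + (c_b/|χ_a|) B̂`. -/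
noncomputable def Da (B : ℝ → Fin 3 → ℝ) (t : ℝ) : Fin 3 → ℝ :=
  χa B t + (cb B t * (norm3 (χa B t))⁻¹) • Bhat B t

/-! With `C := B × Ḃ` one has `χ_a = |B|⁻² C` and `χ_b = |B|⁻² Ċ` (as `Ḃ × Ḃ = 0`), so
`χ̂_a = C/|C|`, whose derivative is the component of `Ċ/|C|` orthogonal to `χ̂_a`. Both `Ċ` and
`χ̂_a` are orthogonal to `B̂`, so that component lies along `B̂ × χ̂_a`, with coefficient
`B̂·(χ̂_a × Ċ)/|C| = c_b/|χ_a|`. This is `D_a × χ̂_a`, since `χ_a × χ̂_a = 0`. -/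

open scoped Matrix

theorem LinearMap.hasDerivAt_of_bilinear {E F G : Type*}
    [NormedAddCommGroup E] [NormedSpace ℝ E] [FiniteDimensional ℝ E]
    [NormedAddCommGroup F] [NormedSpace ℝ F] [FiniteDimensional ℝ F]
    [NormedAddCommGroup G] [NormedSpace ℝ G]
    (L : E →ₗ[ℝ] F →ₗ[ℝ] G) {u : ℝ → E} {v : ℝ → F} {u' : E} {v' : F} {x : ℝ}
    (hu : HasDerivAt u u' x) (hv : HasDerivAt v v' x) :
    HasDerivAt (fun s ↦ L (u s) (v s)) (L (u x) v' + L u' (v x)) x :=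
  (LinearMap.toContinuousLinearMap
    (LinearMap.toContinuousLinearMap.toLinearMap ∘ₗ L)).hasDerivAt_of_bilinear
    (fun _ ↦ hu) (fun _ ↦ hv)

theorem HasDerivAt.crossProduct {u v : ℝ → Fin 3 → ℝ} {u' v' : Fin 3 → ℝ} {x : ℝ}
    (hu : HasDerivAt u u' x) (hv : HasDerivAt v v' x) :
    HasDerivAt (fun s ↦ u s ⨯₃ v s) (u x ⨯₃ v' + u' ⨯₃ v x) x :=
  _root_.crossProduct.hasDerivAt_of_bilinear hu hv

theorem HasDerivAt.dotProduct {ι : Type*} [Fintype ι] {u v : ℝ → ι → ℝ} {u' v' : ι → ℝ} {x : ℝ}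
    (hu : HasDerivAt u u' x) (hv : HasDerivAt v v' x) :
    HasDerivAt (fun s ↦ u s ⬝ᵥ v s) (u x ⬝ᵥ v' + u' ⬝ᵥ v x) x :=
  (dotProductBilin ℝ ℝ).hasDerivAt_of_bilinear hu hv

theorem dot3_eq_dotProduct (a b : Fin 3 → ℝ) : dot3 a b = a ⬝ᵥ b := rfl

theorem cross3_eq_crossProduct (a b : Fin 3 → ℝ) : cross3 a b = a ⨯₃ b := rfl

theorem norm3_eq_sqrt_dotProduct (a : Fin 3 → ℝ) : norm3 a = √(a ⬝ᵥ a) := by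
  simp only [norm3, dotProduct, sq]

theorem norm3_sq (a : Fin 3 → ℝ) : norm3 a ^ 2 = a ⬝ᵥ a := by
  rw [norm3_eq_sqrt_dotProduct, Real.sq_sqrt (by simpa using dotProduct_self_star_nonneg a)]

theorem dotProduct_self_pos {ι : Type*} [Fintype ι] {a : ι → ℝ} (ha : a ≠ 0) : 0 < a ⬝ᵥ a := by
  simpa using Matrix.dotProduct_self_star_pos_iff.2 ha

theorem norm3_pos {a : Fin 3 → ℝ} (ha : a ≠ 0) : 0 < norm3 a := by
  rw [norm3_eq_sqrt_dotProduct]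
  exact Real.sqrt_pos.2 (dotProduct_self_pos ha)

theorem norm3_smul (r : ℝ) (a : Fin 3 → ℝ) : norm3 (r • a) = |r| * norm3 a := by
  rw [norm3_eq_sqrt_dotProduct, norm3_eq_sqrt_dotProduct, smul_dotProduct, dotProduct_smul,
    smul_eq_mul, smul_eq_mul, ← mul_assoc, Real.sqrt_mul (mul_self_nonneg r),
    Real.sqrt_mul_self_eq_abs]

theorem hasDerivAt_norm3 {f : ℝ → Fin 3 → ℝ} {f' : Fin 3 → ℝ} {x : ℝ}
    (hf : HasDerivAt f f' x) (hx : f x ≠ 0) :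
    HasDerivAt (fun s ↦ norm3 (f s)) ((f x ⬝ᵥ f') / norm3 (f x)) x := by
  simp_rw [norm3_eq_sqrt_dotProduct]
  convert (hf.dotProduct hf).sqrt (dotProduct_self_pos hx).ne' using 1
  rw [dotProduct_comm f']
  field_simp
  ring

def unit3 (v : Fin 3 → ℝ) : Fin 3 → ℝ := (norm3 v)⁻¹ • v

theorem unit3_dotProduct_self {v : Fin 3 → ℝ} (hv : v ≠ 0) : unit3 v ⬝ᵥ unit3 v = 1 := by
  have hpos := norm3_pos hv
  rw [unit3, smul_dotProduct, dotProduct_smul, ← norm3_sq, smul_eq_mul, smul_eq_mul]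
  field_simp

theorem unit3_smul_of_pos {r : ℝ} (hr : 0 < r) (v : Fin 3 → ℝ) : unit3 (r • v) = unit3 v := by
  rw [unit3, unit3, norm3_smul, abs_of_pos hr, smul_smul, mul_inv_rev, inv_mul_cancel_right₀ hr.ne']

theorem unit3_dotProduct_cross (v w : Fin 3 → ℝ) : unit3 v ⬝ᵥ v ⨯₃ w = 0 := by
  rw [unit3, smul_dotProduct, dot_self_cross, smul_zero]

theorem inv_norm3_smul_unit3_cross (v w : Fin 3 → ℝ) :
    (norm3 v)⁻¹ • unit3 v ⨯₃ w = (norm3 v ^ 2)⁻¹ • v ⨯₃ w := by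
  rw [unit3, LinearMap.map_smul₂, smul_smul, sq, mul_inv]

theorem hasDerivAt_unit3 {f : ℝ → Fin 3 → ℝ} {f' : Fin 3 → ℝ} {x : ℝ}
    (hf : HasDerivAt f f' x) (hx : f x ≠ 0) :
    HasDerivAt (fun s ↦ unit3 (f s))
      ((norm3 (f x))⁻¹ • (f' - (unit3 (f x) ⬝ᵥ f') • unit3 (f x))) x := by
  have hne := (norm3_pos hx).ne'
  refine (((hasDerivAt_norm3 hf hx).inv hne).fun_smul hf).congr_deriv ?_
  simp only [unit3, smul_dotProduct, smul_eq_mul]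
  module

theorem sub_dotProduct_smul_eq_dotProduct_cross_smul_cross {R : Type*} [CommRing R]
    {n u v : Fin 3 → R} (hn : n ⬝ᵥ n = 1) (hu : u ⬝ᵥ u = 1) (hnu : n ⬝ᵥ u = 0)
    (hnv : n ⬝ᵥ v = 0) :
    v - (u ⬝ᵥ v) • u = (n ⬝ᵥ u ⨯₃ v) • (n ⨯₃ u) := by
  have hw : u ⨯₃ v = (n ⬝ᵥ u ⨯₃ v) • n := by
    have h := cross_cross_eq_smul_sub_smul' n n (u ⨯₃ v)
    rw [cross_cross_eq_smul_sub_smul' n u v, hnv, dotProduct_comm, hnu, zero_smul, zero_smul,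
      sub_zero, map_zero, hn, one_smul, eq_comm, sub_eq_zero] at h
    exact h.symm
  calc v - (u ⬝ᵥ v) • u = u ⨯₃ v ⨯₃ u := by
        rw [cross_cross_eq_smul_sub_smul, hu, one_smul, dotProduct_comm]
    _ = (n ⬝ᵥ u ⨯₃ v) • (n ⨯₃ u) := by
        conv_lhs => rw [hw]
        exact LinearMap.map_smul₂ _ _ _ _

section Curve

variable (B : ℝ → Fin 3 → ℝ) (t : ℝ)

theorem Bhat_eq_unit3 : Bhat B t = unit3 (B t) := rfl

theorem χahat_eq_unit3 : χahat B t = unit3 (χa B t) := rfl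

theorem χa_eq_smul_cross : χa B t = (norm3 (B t) ^ 2)⁻¹ • B t ⨯₃ deriv B t :=
  inv_norm3_smul_unit3_cross _ _

theorem χb_eq_smul_cross : χb B t = (norm3 (B t) ^ 2)⁻¹ • B t ⨯₃ deriv (deriv B) t :=
  inv_norm3_smul_unit3_cross _ _

variable {B t}

theorem χahat_eq_unit3_cross (hB : B t ≠ 0) : χahat B t = unit3 (B t ⨯₃ deriv B t) := by
  rw [χahat_eq_unit3, χa_eq_smul_cross, unit3_smul_of_pos (by have := norm3_pos hB; positivity)]

theorem cross3_Da_χahat :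
    cross3 (Da B t) (χahat B t) = (cb B t * (norm3 (χa B t))⁻¹) • Bhat B t ⨯₃ χahat B t := by
  rw [cross3, Da, χahat, LinearMap.map_add₂, map_smul, cross_self, smul_zero, zero_add,
    LinearMap.map_smul₂]

theorem cb_mul_inv_norm3_χa (hB : B t ≠ 0) :
    cb B t * (norm3 (χa B t))⁻¹ =
      (norm3 (B t ⨯₃ deriv B t))⁻¹ * (Bhat B t ⬝ᵥ χahat B t ⨯₃ (B t ⨯₃ deriv (deriv B) t)) := by
  have hpos := norm3_pos hB
  rw [cb, χb_eq_smul_cross, χa_eq_smul_cross, norm3_smul, abs_of_pos (by positivity)]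
  simp only [dot3_eq_dotProduct, cross3_eq_crossProduct, map_smul, dotProduct_smul, smul_eq_mul]
  field_simp

end Curve

/-- **Alignment dynamics, second frame equation.** For a twice differentiable
nonvanishing curve `B` with nonvanishing swing rate `χ_a`, the unit vector `χ̂_a`
satisfies `(d/dt) χ̂_a = D_a × χ̂_a`, where `D_a := χ_a + (c_b/|χ_a|) B̂` is the
Darboux angular velocity vector. -/
theorem alignment_dynamics_second (B : ℝ → Fin 3 → ℝ)
    (hB : Differentiable ℝ B) (hB' : Differentiable ℝ (deriv B))
    (hne : ∀ t, B t ≠ 0) (hχ : ∀ t, χa B t ≠ 0) (t : ℝ) :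
    HasDerivAt (fun s => χahat B s) (cross3 (Da B t) (χahat B t)) t := by
  have hC : HasDerivAt (fun s ↦ B s ⨯₃ deriv B s) (B t ⨯₃ deriv (deriv B) t) t := by
    simpa only [cross_self, add_zero] using (hB t).hasDerivAt.crossProduct (hB' t).hasDerivAt
  have hCt : B t ⨯₃ deriv B t ≠ 0 := fun h ↦ hχ t (by rw [χa_eq_smul_cross, h, smul_zero])
  have hunit : (fun s ↦ χahat B s) = fun s ↦ unit3 (B s ⨯₃ deriv B s) :=
    funext fun s ↦ χahat_eq_unit3_cross (hne s)
  have horth : unit3 (B t) ⬝ᵥ unit3 (B t ⨯₃ deriv B t) = 0 := by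
    simp only [unit3, dotProduct_smul, smul_dotProduct, dot_self_cross, smul_zero]
  rw [hunit, cross3_Da_χahat, cb_mul_inv_norm3_χa (hne t), χahat_eq_unit3_cross (hne t),
    Bhat_eq_unit3, mul_smul, ← sub_dotProduct_smul_eq_dotProduct_cross_smul_cross
      (unit3_dotProduct_self (hne t)) (unit3_dotProduct_self hCt) horth
      (unit3_dotProduct_cross _ _)]
  exact hasDerivAt_unit3 hC hCt
end
end
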